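/- Let f be a discrete Morse-Bott function on a finite abstract simplicial complex K, C a collection for f with common value v, and I = C^red its reduced collection, assumed nonempty. Let N be the closure of I and E = {σ ∈ N ∖ I : f(σ) ≤ v}. Then E = {σ ∈ N ∖ I : f(σ) < v} ∪ {σ ∈ N ∖ I : f(σ) = v and σ is upward noncritical w.r.t. C}. -/

import Mathlib

open Finset

noncomputable section
open scoped Classical

/-- `σ` is a facet of `τ`: `σ ⊆ τ` and `dim σ = dim τ − 1`. -/
def Facet (σ τ : Finset ℕ) : Prop := σ ⊆ τ ∧ σ.card + 1 = τ.card

/-- A finite abstract simplicial complex: a finite family of nonempty finite sets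
closed under taking nonempty subsets. -/
def IsComplex (K : Finset (Finset ℕ)) : Prop :=
  (∀ σ ∈ K, σ.Nonempty) ∧ ∀ σ ∈ K, ∀ ν, ν ⊆ σ → ν.Nonempty → ν ∈ K

/-- The closure of a set of cells: all nonempty subsets of its cells. -/
def closureOf (S : Finset (Finset ℕ)) : Finset (Finset ℕ) :=
  S.biUnion fun σ => σ.powerset.filter fun ν => ν ≠ ∅

/-- The graph on `C` joining two cells whenever their closures intersect is connected. -/
def ConnectedOn (C : Finset (Finset ℕ)) : Prop :=
  ∀ a ∈ C, ∀ b ∈ C,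
    Relation.ReflTransGen
      (fun x y => x ∈ C ∧ y ∈ C ∧ (closureOf {x} ∩ closureOf {y}).Nonempty) a b

/-- A nonempty set of cells of `K`, all with the same `f`-value, whose
closure-intersection graph is connected. -/
def IsPreCollection (K : Finset (Finset ℕ)) (f : Finset ℕ → ℝ) (C : Finset (Finset ℕ)) :
    Prop :=
  C ⊆ K ∧ C.Nonempty ∧ (∀ σ ∈ C, ∀ τ ∈ C, f σ = f τ) ∧ ConnectedOn C

/-- A collection for `f`: a maximal constant-value connected set of cells. -/
def IsCollection (K : Finset (Finset ℕ)) (f : Finset ℕ → ℝ) (C : Finset (Finset ℕ)) :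
    Prop :=
  IsPreCollection K f C ∧ ∀ C', IsPreCollection K f C' → C ⊆ C' → C' = C

/-- `#{τ ∉ C : σ < τ, f(τ) < f(σ)}`. -/
def UpCount (K : Finset (Finset ℕ)) (f : Finset ℕ → ℝ) (C : Finset (Finset ℕ))
    (σ : Finset ℕ) : ℕ :=
  (K.filter fun τ => τ ∉ C ∧ Facet σ τ ∧ f τ < f σ).card

/-- `#{ν ∉ C : ν < σ, f(ν) > f(σ)}`. -/
def DownCount (K : Finset (Finset ℕ)) (f : Finset ℕ → ℝ) (C : Finset (Finset ℕ))
    (σ : Finset ℕ) : ℕ :=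
  (K.filter fun ν => ν ∉ C ∧ Facet ν σ ∧ f σ < f ν).card

/-- A discrete Morse-Bott function on `K`. -/
def IsMorseBott (K : Finset (Finset ℕ)) (f : Finset ℕ → ℝ) : Prop :=
  ∀ C, IsCollection K f C → ∀ σ ∈ C, UpCount K f C σ ≤ 1 ∧ DownCount K f C σ ≤ 1

/-- `σ` is upward noncritical w.r.t. `C`. -/
def UpNoncrit (K : Finset (Finset ℕ)) (f : Finset ℕ → ℝ) (C : Finset (Finset ℕ))
    (σ : Finset ℕ) : Prop :=
  ∃ w ∈ K, w ∉ C ∧ Facet σ w ∧ f w < f σ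

/-- `σ` is downward noncritical w.r.t. `C`. -/
def DownNoncrit (K : Finset (Finset ℕ)) (f : Finset ℕ → ℝ) (C : Finset (Finset ℕ))
    (σ : Finset ℕ) : Prop :=
  ∃ w ∈ K, w ∉ C ∧ Facet w σ ∧ f σ < f w

/-- The reduced collection `C^red`: the cells of `C` that are neither upward nor
downward noncritical w.r.t. `C`. -/
def reducedOf (K : Finset (Finset ℕ)) (f : Finset ℕ → ℝ) (C : Finset (Finset ℕ)) :
    Finset (Finset ℕ) :=
  C.filter fun σ => ¬ UpNoncrit K f C σ ∧ ¬ DownNoncrit K f C σ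

/-- A noncritical pair: a two-element set `{σ, τ}` with `σ < τ` and `f σ ≥ f τ`. -/
def IsNoncritPair (f : Finset ℕ → ℝ) (S : Finset (Finset ℕ)) : Prop :=
  ∃ σ τ, Facet σ τ ∧ f τ ≤ f σ ∧ S = {σ, τ}

/-- A discrete Morse function in Forman's sense. -/
def IsDiscreteMorse (K : Finset (Finset ℕ)) (g : Finset ℕ → ℝ) : Prop :=
  ∀ σ ∈ K, (K.filter fun τ => Facet σ τ ∧ g τ ≤ g σ).card ≤ 1 ∧
    (K.filter fun ν => Facet ν σ ∧ g σ ≤ g ν).card ≤ 1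

/-- A critical cell of `g`. -/
def IsCritical (K : Finset (Finset ℕ)) (g : Finset ℕ → ℝ) (σ : Finset ℕ) : Prop :=
  σ ∈ K ∧ (K.filter fun τ => Facet σ τ ∧ g τ ≤ g σ).card = 0 ∧
    (K.filter fun ν => Facet ν σ ∧ g σ ≤ g ν).card = 0

/-!
A cell `σ ∈ N ∖ I` with `f σ = v` lies below some `τ ∈ I`, so it belongs to `C` by maximality
of `C`, and being outside `C^red` it is noncritical. If it were downward noncritical through a
face `w` with `f w > v`, then, since the Morse-Bott condition lets at most one cofacet of a cell
drop in value, `w` could be climbed inside `τ` up to a facet of `τ` of value `≥ f w > v`,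
making `τ` downward noncritical, which contradicts `τ ∈ C^red`.
-/

lemma mem_closureOf {S : Finset (Finset ℕ)} {ν : Finset ℕ} :
    ν ∈ closureOf S ↔ ∃ σ ∈ S, ν ⊆ σ ∧ ν.Nonempty := by
  simp [closureOf, nonempty_iff_ne_empty]

lemma ConnectedOn.insert_of_inter_nonempty {C : Finset (Finset ℕ)} (hC : ConnectedOn C)
    {σ τ : Finset ℕ} (hτ : τ ∈ C) (hστ : (closureOf {σ} ∩ closureOf {τ}).Nonempty) :
    ConnectedOn (insert σ C) := by
  set r := fun x y => x ∈ insert σ C ∧ y ∈ insert σ C ∧ (closureOf {x} ∩ closureOf {y}).Nonempty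
  have hCr : ∀ a ∈ C, ∀ b ∈ C, Relation.ReflTransGen r a b := fun a ha b hb =>
    Relation.ReflTransGen.mono
      (fun _ _ ⟨hx, hy, hxy⟩ => ⟨mem_insert_of_mem hx, mem_insert_of_mem hy, hxy⟩) a b
      (hC a ha b hb)
  have hστ : r σ τ := ⟨mem_insert_self _ _, mem_insert_of_mem hτ, hστ⟩
  have hτσ : r τ σ := ⟨mem_insert_of_mem hτ, mem_insert_self _ _, by rwa [inter_comm]⟩
  intro a ha b hb
  rcases mem_insert.mp ha with rfl | haC <;> rcases mem_insert.mp hb with rfl | hbC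
  · rfl
  · exact .head hστ (hCr τ hτ b hbC)
  · exact .tail (hCr a haC τ hτ) hτσ
  · exact hCr a haC b hbC

lemma exists_isCollection_mem (K : Finset (Finset ℕ)) (f : Finset ℕ → ℝ) {ν : Finset ℕ}
    (hν : ν ∈ K) : ∃ D, IsCollection K f D ∧ ν ∈ D := by
  set S := K.powerset.filter fun D => IsPreCollection K f D ∧ ν ∈ D
  have hνS : {ν} ∈ S := by
    simp only [S, mem_filter, mem_powerset, singleton_subset_iff, mem_singleton]
    refine ⟨hν, ⟨singleton_subset_iff.mpr hν, singleton_nonempty ν, by simp, ?_⟩, trivial⟩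
    intro a ha b hb
    rw [mem_singleton.mp ha, mem_singleton.mp hb]
  obtain ⟨D, hD, hmax⟩ := S.exists_max_image card ⟨_, hνS⟩
  obtain ⟨-, hDpre, hνD⟩ := mem_filter.mp hD
  refine ⟨D, ⟨hDpre, fun C' hC' hDC' => ?_⟩, hνD⟩
  have hC'S : C' ∈ S := mem_filter.mpr ⟨mem_powerset.mpr hC'.1, hC', hDC' hνD⟩
  exact (eq_of_subset_of_card_le hDC' (hmax C' hC'S)).symm

lemma IsCollection.mem_of_subset {K C : Finset (Finset ℕ)} {f : Finset ℕ → ℝ}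
    (hK : IsComplex K) (hC : IsCollection K f C) {σ τ : Finset ℕ} (hτ : τ ∈ C)
    (hστ : σ ⊆ τ) (hσ : σ.Nonempty) (hfσ : f σ = f τ) : σ ∈ C := by
  obtain ⟨⟨hCK, -, hCval, hCconn⟩, hCmax⟩ := hC
  have hval : ∀ x ∈ insert σ C, f x = f τ := by
    simp only [mem_insert, forall_eq_or_imp]
    exact ⟨hfσ, fun x hx => hCval x hx τ hτ⟩
  have hpre : IsPreCollection K f (insert σ C) := by
    refine ⟨insert_subset (hK.2 τ (hCK hτ) σ hστ hσ) hCK, insert_nonempty _ _,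
      fun a ha b hb => by rw [hval a ha, hval b hb], hCconn.insert_of_inter_nonempty hτ ⟨σ, ?_⟩⟩
    simp only [mem_inter, mem_closureOf, mem_singleton, exists_eq_left]
    exact ⟨⟨subset_rfl, hσ⟩, hστ, hσ⟩
  rw [← hCmax _ hpre (subset_insert σ C)]
  exact mem_insert_self σ C

/-- Of two cofacets of `ν` inside `τ`, the Morse-Bott condition on the collection of `ν`
allows at most one to have a smaller value. -/
lemma IsMorseBott.exists_cofacet_le {K : Finset (Finset ℕ)} {f : Finset ℕ → ℝ}
    (hK : IsComplex K) (hf : IsMorseBott K f) {ν τ : Finset ℕ} (hτ : τ ∈ K) (hν : ν.Nonempty)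
    (hντ : ν ⊆ τ) (hcard : ν.card + 2 ≤ τ.card) :
    ∃ μ, Facet ν μ ∧ μ ⊆ τ ∧ f ν ≤ f μ := by
  obtain ⟨D, hD, hνD⟩ := exists_isCollection_mem K f (hK.2 τ hτ ν hντ hν)
  obtain ⟨a, ha, b, hb, hab⟩ :=
    one_lt_card.mp (show 1 < (τ \ ν).card by rw [card_sdiff_of_subset hντ]; omega)
  by_contra! hlt
  have hdrop : ∀ x ∈ τ \ ν, insert x ν ∈ K.filter fun μ => μ ∉ D ∧ Facet ν μ ∧ f μ < f ν := by
    intro x hx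
    obtain ⟨hxτ, hxν⟩ := mem_sdiff.mp hx
    have hfacet : Facet ν (insert x ν) := ⟨subset_insert x ν, (card_insert_of_notMem hxν).symm⟩
    have hsub : insert x ν ⊆ τ := insert_subset hxτ hντ
    have hflt := hlt _ hfacet hsub
    refine mem_filter.mpr ⟨hK.2 τ hτ _ hsub (insert_nonempty x ν), fun hxD => ?_, hfacet, hflt⟩
    exact hflt.ne (hD.1.2.2.1 _ hxD ν hνD)
  have hne : insert a ν ≠ insert b ν := by
    intro h
    have ha' : a ∈ insert b ν := h ▸ mem_insert_self a ν
    rcases mem_insert.mp ha' with h' | h'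
    exacts [hab h', (mem_sdiff.mp ha).2 h']
  have htwo : 2 ≤ UpCount K f D ν := by
    rw [← card_pair hne]
    exact card_le_card (insert_subset (hdrop a ha) (singleton_subset_iff.mpr (hdrop b hb)))
  have hone := (hf D hD ν hνD).1
  omega

lemma IsMorseBott.exists_facet_ge {K : Finset (Finset ℕ)} {f : Finset ℕ → ℝ}
    (hK : IsComplex K) (hf : IsMorseBott K f) {ν τ : Finset ℕ} (hτ : τ ∈ K) (hν : ν.Nonempty)
    (hντ : ν ⊂ τ) : ∃ ρ, Facet ρ τ ∧ ν ⊆ ρ ∧ f ν ≤ f ρ := by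
  obtain ⟨n, hn⟩ : ∃ n, ν.card + n + 1 = τ.card :=
    ⟨τ.card - ν.card - 1, by have := card_lt_card hντ; omega⟩
  replace hντ := hντ.subset
  induction n generalizing ν with
  | zero => exact ⟨ν, ⟨hντ, by omega⟩, subset_rfl, le_rfl⟩
  | succ n ih =>
    obtain ⟨μ, hνμ, hμτ, hfνμ⟩ := hf.exists_cofacet_le hK hτ hν hντ (by omega)
    obtain ⟨ρ, hρτ, hμρ, hfμρ⟩ := ih (hν.mono hνμ.1) (by have := hνμ.2; omega) hμτ
    exact ⟨ρ, hρτ, hνμ.1.trans hμρ, hfνμ.trans hfμρ⟩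

lemma IsMorseBott.downNoncrit_of_ssubset {K C : Finset (Finset ℕ)} {f : Finset ℕ → ℝ}
    (hK : IsComplex K) (hf : IsMorseBott K f) {ν τ : Finset ℕ} (hC : ∀ x ∈ C, f x = f τ)
    (hτ : τ ∈ K) (hν : ν.Nonempty) (hντ : ν ⊂ τ) (hlt : f τ < f ν) :
    DownNoncrit K f C τ := by
  obtain ⟨ρ, hρτ, hνρ, hfνρ⟩ := hf.exists_facet_ge hK hτ hν hντ
  have hτρ : f τ < f ρ := hlt.trans_le hfνρ
  exact ⟨ρ, hK.2 τ hτ ρ hρτ.1 (hν.mono hνρ), fun hρC => hτρ.ne' (hC ρ hρC), hρτ, hτρ⟩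

lemma upNoncrit_of_mem_closureOf_reducedOf {K C : Finset (Finset ℕ)} {f : Finset ℕ → ℝ}
    (hK : IsComplex K) (hf : IsMorseBott K f) (hC : IsCollection K f C) {v : ℝ}
    (hv : ∀ x ∈ C, f x = v) {σ : Finset ℕ} (hσN : σ ∈ closureOf (reducedOf K f C))
    (hσI : σ ∉ reducedOf K f C) (hfσ : f σ = v) : UpNoncrit K f C σ := by
  obtain ⟨τ, hτI, hστ, hσ⟩ := mem_closureOf.mp hσN
  obtain ⟨hτC, -, hτdown⟩ := mem_filter.mp hτI
  have hσC : σ ∈ C := hC.mem_of_subset hK hτC hστ hσ (by rw [hfσ, hv τ hτC])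
  by_contra hup
  obtain ⟨w, hwK, -, hwσ, hfw⟩ : DownNoncrit K f C σ := by
    by_contra hdown
    exact hσI (mem_filter.mpr ⟨hσC, hup, hdown⟩)
  have hστ : σ ⊂ τ := ssubset_of_subset_of_ne hστ (by rintro rfl; exact hσI hτI)
  refine hτdown (hf.downNoncrit_of_ssubset hK (fun x hx => by rw [hv x hx, hv τ hτC])
    (hC.1.1 hτC) (hK.1 w hwK) (hwσ.1.trans_ssubset hστ) ?_)
  rwa [hv τ hτC, ← hfσ]

theorem statement15_general (K : Finset (Finset ℕ)) (hK : IsComplex K) (f : Finset ℕ → ℝ)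
    (hf : IsMorseBott K f) (C : Finset (Finset ℕ)) (hC : IsCollection K f C)
    (v : ℝ) (hv : ∀ τ ∈ C, f τ = v) :
    let I := reducedOf K f C
    let N := closureOf I
    let E := N.filter fun σ => σ ∉ I ∧ f σ ≤ v
    E = (N.filter fun σ => σ ∉ I ∧ f σ < v) ∪
        (N.filter fun σ => σ ∉ I ∧ f σ = v ∧ UpNoncrit K f C σ) := by
  intro I N E
  ext σ
  simp only [E, mem_union, mem_filter]
  constructor
  · rintro ⟨hσN, hσI, hfσ⟩
    rcases hfσ.lt_or_eq with hlt | heq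
    · exact .inl ⟨hσN, hσI, hlt⟩
    · exact .inr ⟨hσN, hσI, heq, upNoncrit_of_mem_closureOf_reducedOf hK hf hC hv hσN hσI heq⟩
  · rintro (⟨hσN, hσI, hlt⟩ | ⟨hσN, hσI, heq, -⟩)
    exacts [⟨hσN, hσI, hlt.le⟩, ⟨hσN, hσI, heq.le⟩]

/-- For a collection `C` with common value `v` and nonempty `I = C^red`,
with `N = closure(I)` and `E = {σ ∈ N ∖ I : f σ ≤ v}`, the exit set decomposes as
`E = {σ ∈ N ∖ I : f σ < v} ∪ {σ ∈ N ∖ I : f σ = v and σ upward noncritical w.r.t. C}`. -/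
theorem statement15 (K : Finset (Finset ℕ)) (hK : IsComplex K) (f : Finset ℕ → ℝ)
    (hf : IsMorseBott K f) (C : Finset (Finset ℕ)) (hC : IsCollection K f C)
    (v : ℝ) (hv : ∀ τ ∈ C, f τ = v) (hne : (reducedOf K f C).Nonempty) :
    let I := reducedOf K f C
    let N := closureOf I
    let E := N.filter fun σ => σ ∉ I ∧ f σ ≤ v
    E = (N.filter fun σ => σ ∉ I ∧ f σ < v) ∪
        (N.filter fun σ => σ ∉ I ∧ f σ = v ∧ UpNoncrit K f C σ) :=
  statement15_general K hK f hf C hC v hv
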